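/- Let Ψ : {-1,1}^d → R^{m̂} be any map with ||Ψ(v)||_2 ≤ 1 for all v, and let ε > 0, B > 0 with m̂ B^2 ≤ ε^2 · C(d, r) (binomial coefficient d choose r). Then there exists a subset u ∈ {0,1}^d with ||u||_1 = r such that, for the parity label f_u(v) = (-1)^{u^T v} and v uniform on {-1,1}^d, every linear head a ∈ R^{m̂} with ||a||_2 ≤ B satisfies E_v[ max(1 - f_u(v) · a^T Ψ(v), 0) ] ≥ 1 - ε. -/

import Mathlib

/-!
The correlations `c_u = E_v[f_u(v) Ψ(v)]` are, coordinatewise, the Fourier coefficients of `Ψ`.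
As the parities are orthonormal, Bessel's inequality gives `∑_u ‖c_u‖² ≤ E_v ‖Ψ(v)‖² ≤ 1`, so
some `r`-subset `u` has `‖c_u‖² ≤ 1 / C(d,r)`. The hinge loss dominates `1 - y ŷ`, hence the
risk of a head `a` is at least `1 - ⟪a, c_u⟫ ≥ 1 - B ‖c_u‖ ≥ 1 - ε`.
-/

open scoped RealInnerProductSpace

/-- The `(r,u)`-sparse parity label of `v ∈ {-1,1}^d` (encoded by a Boolean vector),
where the subset `u` is encoded by a `Finset`: `f_u(v) = ∏_{i ∈ u} v_i`. -/
def parity {d : ℕ} (u : Finset (Fin d)) (v : Fin d → Bool) : ℝ :=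
  ∏ i ∈ u, (if v i then 1 else -1)

section Parity

variable {d : ℕ}

lemma parity_mul_self (u : Finset (Fin d)) (v : Fin d → Bool) : parity u v * parity u v = 1 := by
  rw [parity, ← Finset.prod_mul_distrib]
  exact Finset.prod_eq_one fun i _ => by cases v i <;> norm_num

lemma parity_mul_parity (u w : Finset (Fin d)) (v : Fin d → Bool) :
    parity u v * parity w v = parity (symmDiff u w) v := by
  classical
  have split : ∀ s t : Finset (Fin d), parity s v = parity (s \ t) v * parity (s ∩ t) v :=
    fun s t => by
      rw [parity, parity, parity, ← Finset.prod_union (Finset.disjoint_sdiff_inter s t),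
        Finset.sdiff_union_inter]
  have hsd : parity (symmDiff u w) v = parity (u \ w) v * parity (w \ u) v := by
    rw [parity, parity, parity, symmDiff_def, Finset.sup_eq_union,
      Finset.prod_union disjoint_sdiff_sdiff]
  rw [split u w, split w u, Finset.inter_comm w u, hsd]
  linear_combination (parity (u \ w) v * parity (w \ u) v) * parity_mul_self (u ∩ w) v

lemma sum_parity (u : Finset (Fin d)) :
    ∑ v, parity u v = if u = ∅ then (2 ^ d : ℝ) else 0 := by
  classical
  have hprod : ∀ v : Fin d → Bool, parity u v =
      ∏ i, if i ∈ u then (if v i then (1 : ℝ) else -1) else 1 := fun v => by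
    rw [Finset.prod_ite_mem, Finset.univ_inter, parity]
  -- Summing a product of one-coordinate factors over the cube factorises coordinatewise.
  simp only [hprod]
  rw [← Fintype.prod_sum fun i (b : Bool) => if i ∈ u then (if b then (1 : ℝ) else -1) else 1]
  split_ifs with hu
  · simp [hu]
  · obtain ⟨i, hi⟩ := Finset.nonempty_iff_ne_empty.2 hu
    exact Finset.prod_eq_zero (Finset.mem_univ i) (by simp [hi])

lemma sum_parity_mul_parity (u w : Finset (Fin d)) :
    ∑ v, parity u v * parity w v = if u = w then (2 ^ d : ℝ) else 0 := by
  simp only [parity_mul_parity, sum_parity, Finset.symmDiff_eq_empty]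

end Parity

section Cube

variable {d : ℕ}

/-- A function on the cube as a vector of `ℓ²`, scaled so that the inner product is the mean
of the pointwise product under the uniform measure. -/
noncomputable def cubeVec (f : (Fin d → Bool) → ℝ) : EuclideanSpace ℝ (Fin d → Bool) :=
  (√(2 ^ d))⁻¹ • WithLp.toLp 2 f

lemma inner_cubeVec (f g : (Fin d → Bool) → ℝ) :
    ⟪cubeVec f, cubeVec g⟫ = (2 ^ d : ℝ)⁻¹ * ∑ v, f v * g v := by
  simp only [cubeVec, inner_smul_left, inner_smul_right, PiLp.inner_apply,
    RCLike.inner_apply, conj_trivial, ← mul_assoc, ← mul_inv,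
    Real.mul_self_sqrt (by positivity : (0 : ℝ) ≤ 2 ^ d)]
  simp [mul_comm]

lemma orthonormal_cubeVec_parity :
    Orthonormal ℝ fun u : Finset (Fin d) => cubeVec (parity u) := by
  rw [orthonormal_iff_ite]
  intro u w
  rw [inner_cubeVec, sum_parity_mul_parity]
  split_ifs <;> simp

/-- Bessel's inequality for the parity basis, in terms of means over the cube. -/
lemma sum_sq_mean_parity_mul_le (s : Finset (Finset (Fin d))) (g : (Fin d → Bool) → ℝ) :
    ∑ u ∈ s, ((2 ^ d : ℝ)⁻¹ * ∑ v, parity u v * g v) ^ 2 ≤ (2 ^ d : ℝ)⁻¹ * ∑ v, g v ^ 2 := by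
  have := orthonormal_cubeVec_parity.sum_inner_products_le (s := s) (cubeVec g)
  rw [← real_inner_self_eq_norm_sq, inner_cubeVec] at this
  simpa only [inner_cubeVec, Real.norm_eq_abs, sq_abs, ← sq] using this

end Cube

section Correlation

variable {d : ℕ} {ι : Type*} [Fintype ι]

noncomputable def parityCorrelation (Ψ : (Fin d → Bool) → EuclideanSpace ℝ ι)
    (u : Finset (Fin d)) : EuclideanSpace ℝ ι :=
  (2 ^ d : ℝ)⁻¹ • ∑ v, parity u v • Ψ v

lemma inner_parityCorrelation (Ψ : (Fin d → Bool) → EuclideanSpace ℝ ι) (u : Finset (Fin d))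
    (a : EuclideanSpace ℝ ι) :
    ⟪a, parityCorrelation Ψ u⟫ = (2 ^ d : ℝ)⁻¹ * ∑ v, parity u v * ⟪a, Ψ v⟫ := by
  simp only [parityCorrelation, inner_smul_right, inner_sum]

lemma sum_norm_sq_parityCorrelation_le (Ψ : (Fin d → Bool) → EuclideanSpace ℝ ι)
    (s : Finset (Finset (Fin d))) :
    ∑ u ∈ s, ‖parityCorrelation Ψ u‖ ^ 2 ≤ (2 ^ d : ℝ)⁻¹ * ∑ v, ‖Ψ v‖ ^ 2 := by
  have hcoord : ∀ u j,
      (parityCorrelation Ψ u).ofLp j = (2 ^ d : ℝ)⁻¹ * ∑ v, parity u v * Ψ v j :=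
    fun u j => by simp [parityCorrelation]
  simp only [EuclideanSpace.norm_sq_eq, Real.norm_eq_abs, sq_abs, hcoord]
  rw [Finset.sum_comm, Finset.sum_comm (s := Finset.univ) (t := Finset.univ), Finset.mul_sum]
  exact Finset.sum_le_sum fun j _ => sum_sq_mean_parity_mul_le s fun v => Ψ v j

lemma exists_card_eq_choose_mul_norm_sq_parityCorrelation_le {r : ℕ} (hr : r ≤ d)
    (Ψ : (Fin d → Bool) → EuclideanSpace ℝ ι) (hΨ : ∀ v, ‖Ψ v‖ ≤ 1) :
    ∃ u : Finset (Fin d), u.card = r ∧ (d.choose r : ℝ) * ‖parityCorrelation Ψ u‖ ^ 2 ≤ 1 := by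
  set S := Finset.powersetCard r (Finset.univ : Finset (Fin d))
  have hScard : S.card = d.choose r := by simp [S]
  have hmean : (2 ^ d : ℝ)⁻¹ * ∑ v, ‖Ψ v‖ ^ 2 ≤ 1 := by
    calc (2 ^ d : ℝ)⁻¹ * ∑ v, ‖Ψ v‖ ^ 2
        ≤ (2 ^ d : ℝ)⁻¹ * ∑ _v : Fin d → Bool, 1 := by
          gcongr with v
          exact pow_le_one₀ (norm_nonneg _) (hΨ v)
      _ = 1 := by simp
  have hsum : ∑ u ∈ S, (d.choose r : ℝ) * ‖parityCorrelation Ψ u‖ ^ 2 ≤ ∑ _u ∈ S, 1 := by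
    rw [← Finset.mul_sum, Finset.sum_const, hScard, nsmul_one]
    exact mul_le_of_le_one_right (Nat.cast_nonneg _)
      ((sum_norm_sq_parityCorrelation_le Ψ S).trans hmean)
  obtain ⟨u, huS, hu⟩ :=
    Finset.exists_le_of_sum_le (Finset.card_pos.1 (hScard ▸ Nat.choose_pos hr)) hsum
  exact ⟨u, (Finset.mem_powersetCard.1 huS).2, hu⟩

end Correlation

lemma one_sub_mean_le_mean_max_one_sub {α : Type*} [Fintype α] [Nonempty α] (y : α → ℝ) :
    1 - (Fintype.card α : ℝ)⁻¹ * ∑ x, y x ≤ (Fintype.card α : ℝ)⁻¹ * ∑ x, max (1 - y x) 0 := by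
  have hcard : (0 : ℝ) < Fintype.card α := Nat.cast_pos.2 Fintype.card_pos
  calc 1 - (Fintype.card α : ℝ)⁻¹ * ∑ x, y x
        = (Fintype.card α : ℝ)⁻¹ * ∑ x, (1 - y x) := by
        rw [Finset.sum_sub_distrib, Finset.sum_const, Finset.card_univ, nsmul_one, mul_sub,
          inv_mul_cancel₀ hcard.ne']
    _ ≤ _ := by gcongr with x; exact le_max_left _ _

lemma real_inner_le_of_card_mul_sq_le {ι : Type*} [Fintype ι] {a c : EuclideanSpace ℝ ι}
    {B ε N : ℝ} (ha : ‖a‖ ≤ B) (hc : N * ‖c‖ ^ 2 ≤ 1) (hN : 0 < N) (hε : 0 ≤ ε)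
    (hcard : (Fintype.card ι : ℝ) * B ^ 2 ≤ ε ^ 2 * N) : ⟪a, c⟫ ≤ ε := by
  rcases isEmpty_or_nonempty ι with _ | _
  · simpa [Subsingleton.elim a 0] using hε
  have hB : B ^ 2 ≤ ε ^ 2 * N :=
    le_trans (le_mul_of_one_le_left (sq_nonneg B) (Nat.one_le_cast.2 Fintype.card_pos)) hcard
  have hac : (‖a‖ * ‖c‖) ^ 2 ≤ ε ^ 2 := by
    refine le_of_mul_le_mul_right ?_ hN
    calc (‖a‖ * ‖c‖) ^ 2 * N = ‖a‖ ^ 2 * (N * ‖c‖ ^ 2) := by ring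
      _ ≤ B ^ 2 * 1 := by gcongr
      _ ≤ ε ^ 2 * N := by rwa [mul_one]
  exact (real_inner_le_norm a c).trans (abs_le_of_sq_le_sq' hac hε).2

theorem stmt_14_general (d r : ℕ) (hr : r ≤ d) (mhat : ℕ)
    (Ψ : (Fin d → Bool) → EuclideanSpace ℝ (Fin mhat))
    (hΨ : ∀ v, ‖Ψ v‖ ≤ 1) (ε B : ℝ) (hε : 0 < ε)
    (hcard : (mhat : ℝ) * B ^ 2 ≤ ε ^ 2 * (Nat.choose d r : ℝ)) :
    ∃ u : Finset (Fin d), u.card = r ∧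
      ∀ a : EuclideanSpace ℝ (Fin mhat), ‖a‖ ≤ B →
        1 - ε ≤ (1 / 2 ^ d : ℝ) *
          ∑ v : Fin d → Bool, max (1 - parity u v * ⟪a, Ψ v⟫) 0 := by
  obtain ⟨u, hu, hcorr⟩ := exists_card_eq_choose_mul_norm_sq_parityCorrelation_le hr Ψ hΨ
  refine ⟨u, hu, fun a ha => ?_⟩
  have hinner : ⟪a, parityCorrelation Ψ u⟫ ≤ ε :=
    real_inner_le_of_card_mul_sq_le ha hcorr (Nat.cast_pos.2 (Nat.choose_pos hr)) hε.le
      (by simpa using hcard)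
  have hrisk := one_sub_mean_le_mean_max_one_sub fun v => parity u v * ⟪a, Ψ v⟫
  simp only [Fintype.card_fun, Fintype.card_bool, Fintype.card_fin, Nat.cast_pow,
    Nat.cast_ofNat] at hrisk
  rw [one_div]
  linarith [inner_parityCorrelation Ψ u a]

/-- Random features cannot solve all sparse parities: if `Ψ : {-1,1}^d → ℝ^m̂` has
`‖Ψ(v)‖ ≤ 1` for all `v`, and `m̂ B² ≤ ε² · C(d,r)`, then there is an `r`-subset `u`
such that every linear head `a` with `‖a‖ ≤ B` incurs expected hinge loss at least
`1 - ε` on the `(r,u)`-sparse parity task with uniform inputs. -/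
theorem stmt_14 (d r : ℕ) (hr : r ≤ d) (mhat : ℕ)
    (Ψ : (Fin d → Bool) → EuclideanSpace ℝ (Fin mhat))
    (hΨ : ∀ v, ‖Ψ v‖ ≤ 1) (ε B : ℝ) (hε : 0 < ε) (hB : 0 < B)
    (hcard : (mhat : ℝ) * B ^ 2 ≤ ε ^ 2 * (Nat.choose d r : ℝ)) :
    ∃ u : Finset (Fin d), u.card = r ∧
      ∀ a : EuclideanSpace ℝ (Fin mhat), ‖a‖ ≤ B →
        1 - ε ≤ (1 / 2 ^ d : ℝ) *
          ∑ v : Fin d → Bool, max (1 - parity u v * ⟪a, Ψ v⟫) 0 :=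
  stmt_14_general d r hr mhat Ψ hΨ ε B hε hcard
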